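/- arXiv:0812.1728 — 4 statements merged into one kernel-verified Lean document; each statement's English description precedes it below -/
import Mathlib

section
/- Double negation: if x̄ is a negation of x and x̿ is a negation of x̄, then {x̿} ~ {x}. -/
structure ConsistencySpace (X : Type*) [Nonempty X] where
  P : Set (Set X)
  univ_not_mem : Set.univ ∉ P
  singleton_mem : ∀ x : X, {x} ∈ P
  downward : ∀ ⦃A B : Set X⦄, A ∈ P → B ⊆ A → B ∈ P

def ConsistencySpace.Equiv {X : Type*} [Nonempty X] (C : ConsistencySpace X)
    (χ γ : Set X) : Prop :=
  ∀ κ : Set X, χ ∪ κ ∈ C.P ↔ γ ∪ κ ∈ C.P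

def ConsistencySpace.IsNegation {X : Type*} [Nonempty X] (C : ConsistencySpace X)
    (x y : X) : Prop :=
  ({x, y} : Set X) ∉ C.P ∧
  (∀ z : Set X, {x} ∪ z ∉ C.P → C.Equiv ({y} ∪ z) z) ∧
  (∀ z : Set X, {y} ∪ z ∉ C.P → C.Equiv ({x} ∪ z) z)

def ConsistencySpace.IsNegationSet {X : Type*} [Nonempty X] (C : ConsistencySpace X)
    (A : Set X) (a : X) : Prop :=
  A ∪ {a} ∉ C.P ∧
  (∀ z : Set X, A ∪ z ∉ C.P → C.Equiv ({a} ∪ z) z) ∧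
  (∀ z : Set X, {a} ∪ z ∉ C.P → C.Equiv (A ∪ z) z)

namespace ConsistencySpace

variable {X : Type*} [Nonempty X] {C : ConsistencySpace X} {x y w : X} {κ : Set X}

theorem IsNegation.symm (h : C.IsNegation x y) : C.IsNegation y x :=
  ⟨Set.pair_comm x y ▸ h.1, h.2.2, h.2.1⟩

/-- Once `x` is inconsistent with `κ`, its negation `y` is absorbed by `κ`, hence consistent with
every `w` that is consistent with `κ`. -/
theorem IsNegation.pair_mem_of_union_not_mem (h : C.IsNegation x y) (hx : {x} ∪ κ ∉ C.P)
    (hw : {w} ∪ κ ∈ C.P) : ({y, w} : Set X) ∈ C.P := by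
  have hyw : {y} ∪ κ ∪ {w} ∈ C.P := (h.2.1 κ hx {w}).2 (by rwa [Set.union_comm])
  exact C.downward hyw (by simp [Set.insert_subset_iff])

end ConsistencySpace

theorem double_negation {X : Type*} [Nonempty X] (C : ConsistencySpace X)
    (x xb xbb : X) (h₁ : C.IsNegation x xb) (h₂ : C.IsNegation xb xbb) :
    C.Equiv {xbb} {x} := fun _ =>
  ⟨fun h => by_contra fun hx => h₂.1 (h₁.pair_mem_of_union_not_mem hx h),
    fun h => by_contra fun hxbb => h₁.symm.1 (h₂.symm.pair_mem_of_union_not_mem hxbb h)⟩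
end

section
/- If {x} ~ {y}, x̄ is a negation of x, and ȳ is a negation of y, then {x̄} ~ {ȳ}. -/
namespace ConsistencySpace

variable {X : Type*} [Nonempty X] {C : ConsistencySpace X}

theorem notMem_of_subset {A B : Set X} (hA : A ∉ C.P) (hAB : A ⊆ B) : B ∉ C.P :=
  fun hB => hA (C.downward hB hAB)

theorem Equiv.symm {χ γ : Set X} (h : C.Equiv χ γ) : C.Equiv γ χ :=
  fun κ => (h κ).symm

theorem IsNegation.union_mem_iff {y yb : X} (hy : C.IsNegation y yb) {w : Set X}
    (hw : {y} ∪ w ∉ C.P) : {yb} ∪ w ∈ C.P ↔ w ∈ C.P := by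
  simpa only [Set.union_empty] using hy.2.1 w hw ∅

/-- `x`, hence `y`, is inconsistent with `{xb} ∪ κ`, so the negation `yb` of `y` can be added to it. -/
theorem IsNegation.union_mem_of_equiv {y yb : X} (hy : C.IsNegation y yb) {x xb : X}
    (hxy : C.Equiv {x} {y}) (hx : ({x, xb} : Set X) ∉ C.P) {κ : Set X}
    (h : {xb} ∪ κ ∈ C.P) : {yb} ∪ κ ∈ C.P := by
  have hx_incons : {x} ∪ ({xb} ∪ κ) ∉ C.P :=
    notMem_of_subset hx (by simp [Set.insert_subset_iff])
  have hy_incons : {y} ∪ ({xb} ∪ κ) ∉ C.P := fun hmem => hx_incons ((hxy _).mpr hmem)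
  have hyb : {yb} ∪ ({xb} ∪ κ) ∈ C.P := (hy.union_mem_iff hy_incons).mpr h
  exact C.downward hyb (Set.union_subset_union_right _ Set.subset_union_right)

end ConsistencySpace

theorem equiv_negation_congr {X : Type*} [Nonempty X] (C : ConsistencySpace X)
    (x y xb yb : X) (hxy : C.Equiv {x} {y})
    (hx : C.IsNegation x xb) (hy : C.IsNegation y yb) :
    C.Equiv {xb} {yb} := fun _ =>
  ⟨hy.union_mem_of_equiv hxy hx.1, hx.union_mem_of_equiv hxy.symm hy.1⟩
end

section
/- Transitivity of implication: if x → y and y → z, then x → z. -/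
namespace ConsistencySpace

variable {X : Type*} [Nonempty X] {C : ConsistencySpace X}

/-- A point `w` inconsistent with `y` entails `ȳ`: since `{ȳ, w} ~ {w}`, `ȳ` may be added to any
consistent set containing `w`. -/
theorem IsNegation.insert_insert_mem {y yb w : X} (hy : C.IsNegation y yb)
    (hyw : ({y, w} : Set X) ∉ C.P) {κ : Set X} (hκ : insert w κ ∈ C.P) :
    insert yb (insert w κ) ∈ C.P := by
  have hequiv : C.Equiv ({yb} ∪ {w}) {w} :=
    hy.2.1 {w} (by rwa [Set.singleton_union])
  have h := (hequiv κ).mpr (by rwa [Set.singleton_union])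
  rwa [Set.union_assoc, Set.singleton_union, Set.singleton_union] at h

end ConsistencySpace

theorem imp_trans_general {X : Type*} [Nonempty X] (C : ConsistencySpace X)
    (x y yb zb : X) (hy : C.IsNegation y yb)
    (hxy : ({x, yb} : Set X) ∉ C.P) (hyz : ({y, zb} : Set X) ∉ C.P) :
    ({x, zb} : Set X) ∉ C.P := by
  intro hxz
  have hyzx : ({yb, zb, x} : Set X) ∈ C.P :=
    hy.insert_insert_mem hyz (by rwa [Set.pair_comm])
  exact hxy (C.downward hyzx (by grind))

theorem imp_trans {X : Type*} [Nonempty X] (C : ConsistencySpace X)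
    (x y z xb yb zb : X) (hx : C.IsNegation x xb) (hy : C.IsNegation y yb)
    (hz : C.IsNegation z zb)
    (hxy : ({x, yb} : Set X) ∉ C.P) (hyz : ({y, zb} : Set X) ∉ C.P) :
    ({x, zb} : Set X) ∉ C.P :=
  imp_trans_general C x y yb zb hy hxy hyz
end

section
/- Greatest lower bound property: if t → x and t → y, then {t} ∪ {x, y}‾ is inconsistent, i.e. t → {x,y} in the sense that {t, c̄} ∉ P where c̄ is a negation of the set {x, y} (meaning {x, y} ∪ {c̄} ∉ P and the conditional conditions hold); equivalently, {x, y, t} ~ {t}. -/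
/-!
`C.Equiv (A ∪ B) B` says that `B` already entails `A`. If `t → x`, the negation property of `x̄`
applied to the inconsistent set `{t, x̄}` gives that `{t}` entails `x`; likewise for `y`.
Entailed sets can be added one at a time, so `{t}` entails `{x, y}`, i.e. `{x, y, t} ~ {t}`.
Finally, whatever entails `{x, y}` is inconsistent with its negation `c̄`.
-/

namespace ConsistencySpace

variable {X : Type*} [Nonempty X] {C : ConsistencySpace X}

theorem IsNegation.equiv_union_singleton {x xb t : X} (hx : C.IsNegation x xb)
    (h : ({t, xb} : Set X) ∉ C.P) : C.Equiv ({x} ∪ {t}) {t} :=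
  hx.2.2 {t} (by rwa [Set.singleton_union, Set.pair_comm])

theorem equiv_union_union {A A' B : Set X} (hA : C.Equiv (A ∪ B) B)
    (hA' : C.Equiv (A' ∪ B) B) : C.Equiv (A ∪ A' ∪ B) B := fun κ =>
  calc A ∪ A' ∪ B ∪ κ ∈ C.P ↔ A ∪ B ∪ (A' ∪ κ) ∈ C.P := by
        rw [Set.union_right_comm A A', Set.union_assoc]
    _ ↔ B ∪ (A' ∪ κ) ∈ C.P := hA _
    _ ↔ A' ∪ B ∪ κ ∈ C.P := by rw [Set.union_left_comm, Set.union_assoc]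
    _ ↔ B ∪ κ ∈ C.P := hA' κ

theorem union_not_mem_of_equiv_union {A B κ : Set X} (h : C.Equiv (A ∪ B) B)
    (hA : A ∪ κ ∉ C.P) : B ∪ κ ∉ C.P := fun hB =>
  hA <| C.downward ((h κ).2 hB) (Set.union_subset_union_left κ Set.subset_union_left)

end ConsistencySpace

theorem imp_pair_general {X : Type*} [Nonempty X] (C : ConsistencySpace X)
    (t x y xb yb cb : X)
    (hx : C.IsNegation x xb) (hy : C.IsNegation y yb)
    (hc : C.IsNegationSet ({x, y} : Set X) cb)
    (htx : ({t, xb} : Set X) ∉ C.P) (hty : ({t, yb} : Set X) ∉ C.P) :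
    ({t, cb} : Set X) ∉ C.P ∧ C.Equiv ({x, y, t} : Set X) {t} := by
  have hxy : C.Equiv ({x, y} ∪ {t}) {t} := by
    simpa only [Set.singleton_union] using
      ConsistencySpace.equiv_union_union (hx.equiv_union_singleton htx)
        (hy.equiv_union_singleton hty)
  constructor
  · simpa only [Set.singleton_union] using
      ConsistencySpace.union_not_mem_of_equiv_union hxy hc.1
  · simpa only [Set.insert_union, Set.singleton_union] using hxy

theorem imp_pair {X : Type*} [Nonempty X] (C : ConsistencySpace X)
    (t x y tb xb yb cb : X)
    (ht : C.IsNegation t tb) (hx : C.IsNegation x xb) (hy : C.IsNegation y yb)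
    (hc : C.IsNegationSet ({x, y} : Set X) cb)
    (htx : ({t, xb} : Set X) ∉ C.P) (hty : ({t, yb} : Set X) ∉ C.P) :
    ({t, cb} : Set X) ∉ C.P ∧ C.Equiv ({x, y, t} : Set X) {t} :=
  imp_pair_general C t x y xb yb cb hx hy hc htx hty
end
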